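/- arXiv:2108.07956 — 2 statements merged into one kernel-verified Lean document; each statement's English description precedes it below -/
import Mathlib

section
/- Let B be an H₂-convex set in a topological H₂-module X. Then the interior and closure of B decompose as Minkowski sums of idempotent components: interior(B) = e₁·interior(B) + e₂·interior(B) + e₃·interior(B) + e₄·interior(B), and closure(B) = e₁·closure(B) + e₂·closure(B) + e₃·closure(B) + e₄·closure(B). -/
open Pointwise

/-- The ring of bihyperbolic numbers in its idempotent representation:
componentwise operations on `Fin 4 → ℝ`. -/
abbrev D : Type := Fin 4 → ℝ

/-- The idempotents `eᵢ`. -/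
noncomputable def e (i : Fin 4) : D := Pi.single i 1

/-- The bihyperbolic-valued modulus: componentwise absolute value. -/
def dabs (a : D) : D := fun i => |a i|

/-- Strict componentwise inequality `a ≺ b`. -/
def sLt (a b : D) : Prop := ∀ i, a i < b i

/-- The ring homomorphism `ℝ → D` sending `r` to the constant function `r`. -/
def rconst (a : ℝ) : D := fun _ => a

/-- A set `B` in an `H₂`-module is `H₂`-balanced if `c • x ∈ B` whenever
`x ∈ B` and `|c| ⪯ 1`. -/
def H2Balanced {X : Type*} [AddCommGroup X] [Module D X] (B : Set X) : Prop :=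
  ∀ x ∈ B, ∀ c : D, dabs c ≤ 1 → c • x ∈ B

/-- A set `B` in an `H₂`-module is `H₂`-convex if `c • x + (1 - c) • y ∈ B`
for all `x, y ∈ B` and `0 ⪯ c ⪯ 1`. -/
def H2Convex {X : Type*} [AddCommGroup X] [Module D X] (B : Set X) : Prop :=
  ∀ x ∈ B, ∀ y ∈ B, ∀ c : D, 0 ≤ c → c ≤ 1 → c • x + (1 - c) • y ∈ B

/-- A set `B` in an `H₂`-module is `H₂`-absorbing if every `x` admits `ε ≻ 0`
with `c • x ∈ B` whenever `0 ⪯ c ⪯ ε`. -/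
def H2Absorbing {X : Type*} [AddCommGroup X] [Module D X] (B : Set X) : Prop :=
  ∀ x : X, ∃ ε : D, sLt 0 ε ∧ ∀ c : D, 0 ≤ c → c ≤ ε → c • x ∈ B

/-- An `H₂`-valued seminorm. -/
def IsH2Seminorm {X : Type*} [AddCommGroup X] [Module D X] (p : X → D) : Prop :=
  (∀ c : D, ∀ x : X, p (c • x) = dabs c * p x) ∧ ∀ x y : X, p (x + y) ≤ p x + p y

/-- An `H₂`-valued norm. -/
def IsH2Norm {X : Type*} [AddCommGroup X] [Module D X] (N : X → D) : Prop :=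
  (∀ x : X, N x = 0 ↔ x = 0) ∧ (∀ c : D, ∀ x : X, N (c • x) = dabs c * N x) ∧
    ∀ x y : X, N (x + y) ≤ N x + N y

/-- A subset of a topological `H₂`-module is bounded if every neighbourhood of `0`
absorbs it. -/
def H2Bounded {X : Type*} [AddCommGroup X] [Module D X] [TopologicalSpace X]
    (B : Set X) : Prop :=
  ∀ U ∈ nhds (0 : X), ∃ c : D, sLt 0 c ∧ B ⊆ c • U

/-- The `H₂`-valued Minkowski functional of a set `B`, defined componentwise. -/
noncomputable def minkowski {X : Type*} [AddCommGroup X] [Module D X]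
    (B : Set X) (x : X) : D :=
  fun i => sInf {t : ℝ | ∃ α : D, sLt 0 α ∧ x ∈ α • B ∧ α i = t}
lemma e_sum : e 0 + e 1 + e 2 + e 3 = (1 : D) := by
  funext j; fin_cases j <;> simp [e, Pi.single_apply]

lemma mix {X : Type*} [AddCommGroup X] [Module D X] {B : Set X} (hB : H2Convex B)
    {a b c d : X} (ha : a ∈ B) (hb : b ∈ B) (hc : c ∈ B) (hd : d ∈ B) :
    e 0 • a + e 1 • b + e 2 • c + e 3 • d ∈ B := by
  have h0 : (0:D) ≤ e 0 ∧ e 0 ≤ 1 := by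
    constructor <;> (intro j; fin_cases j <;> simp [e, Pi.single_apply])
  have h1 : (0:D) ≤ e 0 + e 1 ∧ e 0 + e 1 ≤ 1 := by
    constructor <;> (intro j; fin_cases j <;> simp [e, Pi.single_apply])
  have h2 : (0:D) ≤ e 0 + e 1 + e 2 ∧ e 0 + e 1 + e 2 ≤ 1 := by
    constructor <;> (intro j; fin_cases j <;> simp [e, Pi.single_apply])
  have s1 := hB a ha b hb (e 0) h0.1 h0.2
  have s2 := hB _ s1 c hc (e 0 + e 1) h1.1 h1.2
  have s3 := hB _ s2 d hd (e 0 + e 1 + e 2) h2.1 h2.2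
  have key : e 0 • a + e 1 • b + e 2 • c + e 3 • d =
      (e 0 + e 1 + e 2) • ((e 0 + e 1) • (e 0 • a + (1 - e 0) • b) + (1 - (e 0 + e 1)) • c)
        + (1 - (e 0 + e 1 + e 2)) • d := by
    match_scalars <;> (funext j; fin_cases j <;> norm_num [e, Pi.single_apply, Fin.ext_iff] <;> decide)
  rw [key]; exact s3

lemma smul_e_sum {X : Type*} [AddCommGroup X] [Module D X] (v : X) :
    e 0 • v + e 1 • v + e 2 • v + e 3 • v = v := by
  rw [← add_smul, ← add_smul, ← add_smul, e_sum, one_smul]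

lemma decomp_of_mix {X : Type*} [AddCommGroup X] [Module D X] {S : Set X}
    (hS : ∀ a ∈ S, ∀ b ∈ S, ∀ c ∈ S, ∀ d ∈ S,
      e 0 • a + e 1 • b + e 2 • c + e 3 • d ∈ S) :
    S = e 0 • S + e 1 • S + e 2 • S + e 3 • S := by
  apply Set.Subset.antisymm
  · intro x hx
    have hx' : e 0 • x + e 1 • x + e 2 • x + e 3 • x = x := smul_e_sum x
    exact hx' ▸ Set.add_mem_add (Set.add_mem_add (Set.add_mem_add
      (Set.smul_mem_smul_set hx) (Set.smul_mem_smul_set hx))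
      (Set.smul_mem_smul_set hx)) (Set.smul_mem_smul_set hx)
  · rintro x ⟨y, ⟨z, ⟨u, ⟨a, ha, rfl⟩, v, ⟨b, hb, rfl⟩, rfl⟩, w, ⟨c, hc, rfl⟩, rfl⟩,
      t, ⟨d, hd, rfl⟩, rfl⟩
    exact hS a ha b hb c hc d hd

/-- For an `H₂`-convex set `B` in a topological `H₂`-module, the interior and the
closure of `B` decompose as Minkowski sums of their idempotent components. -/
theorem interior_closure_eq_sum_components {X : Type*} [AddCommGroup X] [Module D X]
    [TopologicalSpace X] [T2Space X] [ContinuousAdd X] [ContinuousSMul D X]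
    (B : Set X) (hB : H2Convex B) :
    interior B =
        e 0 • interior B + e 1 • interior B + e 2 • interior B + e 3 • interior B ∧
      closure B =
        e 0 • closure B + e 1 • closure B + e 2 • closure B + e 3 • closure B := by
  constructor
  · apply decomp_of_mix
    intro a ha b hb c hc d hd
    set z := e 0 • a + e 1 • b + e 2 • c + e 3 • d with hz
    rw [mem_interior_iff_mem_nhds]
    have hn : ∀ x0 ∈ interior B, {w : X | (x0 - z) + w ∈ B} ∈ nhds z := by
      intro x0 hx0
      have hcont : Continuous fun w : X => (x0 - z) + w :=
        continuous_const.add continuous_id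
      have h1 : {w : X | (x0 - z) + w ∈ interior B} ∈ nhds z := by
        apply (isOpen_interior.preimage hcont).mem_nhds
        simpa using hx0
      exact Filter.mem_of_superset h1
        (Set.setOf_subset_setOf.2 fun w hw => interior_subset hw)
    have hU := Filter.inter_mem (Filter.inter_mem (Filter.inter_mem
      (hn a ha) (hn b hb)) (hn c hc)) (hn d hd)
    apply Filter.mem_of_superset hU
    rintro w ⟨⟨⟨hwa, hwb⟩, hwc⟩, hwd⟩
    have hmem := mix hB hwa hwb hwc hwd
    have hw : e 0 • ((a - z) + w) + e 1 • ((b - z) + w) + e 2 • ((c - z) + w)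
        + e 3 • ((d - z) + w) = w := by
      have heq : ∀ x0 : X, (x0 - z) + w = x0 + (w - z) := fun x0 => by abel
      simp only [heq, smul_add]
      have h1 := smul_e_sum (X := X) (w - z)
      have h2 : e 0 • a + e 0 • (w - z) + (e 1 • b + e 1 • (w - z))
          + (e 2 • c + e 2 • (w - z)) + (e 3 • d + e 3 • (w - z))
          = z + (e 0 • (w - z) + e 1 • (w - z) + e 2 • (w - z) + e 3 • (w - z)) := by
        rw [hz]; abel
      rw [h2, h1]; abel
    exact hw ▸ hmem
  · apply decomp_of_mix
    have hBcl : H2Convex (closure B) := by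
      intro x hx y hy c hc0 hc1
      have hcont : Continuous (Function.uncurry fun p q : X => c • p + (1 - c) • q) :=
        ((continuous_fst.const_smul c).add (continuous_snd.const_smul (1 - c)))
      exact map_mem_closure₂ (f := fun p q : X => c • p + (1 - c) • q) hcont hx hy
        fun a ha b hb => hB a ha b hb c hc0 hc1
    intro a ha b hb c hc d hd
    exact mix hBcl ha hb hc hd
end

section
/- Let (X, τ) be a topological H₂-module, B an H₂-convex, H₂-balanced, H₂-absorbing subset of X, q_B the H₂-valued Minkowski functional of B, A_B = {x ∈ X : q_B(x) ≺ 1} and C_B = {x ∈ X : q_B(x) ⪯ 1}. Then: (i) interior(B) ⊆ A_B ⊆ B ⊆ C_B ⊆ closure(B); (ii) if B is open, then B = A_B; (iii) if B is closed, then B = C_B; (iv) if q_B is continuous, then interior(B) = A_B. -/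
open Pointwise

/-!
The gauge values of `x`, i.e. the `α ≻ 0` with `x ∈ α • B`, are closed under componentwise
minimum by `H₂`-convexity: `(α ⊓ β)⁻¹ • x` is the `H₂`-convex combination of `α⁻¹ • x` and
`β⁻¹ • x` with the `0/1`-valued coefficient selecting the smaller component. Hence the four
componentwise infima defining `q_B x` can be approached by a single gauge value, and
`q_B x ≺ 1` yields some `x = α • b` with `b ∈ B`, `0 ≺ α ≺ 1`, so `x ∈ B` by balancedness.
The remaining inclusions come from the real ray `t ↦ t • x`: if `x ∈ interior B` then
`t • x ∈ B` for some `t > 1`, and if `q_B x ⪯ 1` then `t • x ∈ A_B ⊆ B` for all `0 < t < 1`.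
-/

open Filter Topology

lemma inv_mul_cancel_of_sLt {α : D} (hα : sLt 0 α) : α⁻¹ * α = 1 :=
  funext fun i => inv_mul_cancel₀ (hα i).ne'

lemma mul_inv_cancel_of_sLt {α : D} (hα : sLt 0 α) : α * α⁻¹ = 1 :=
  funext fun i => mul_inv_cancel₀ (hα i).ne'

lemma sLt_zero_inv {α : D} (hα : sLt 0 α) : sLt 0 α⁻¹ :=
  fun i => inv_pos.mpr (hα i)

lemma isOpen_setOf_sLt {X : Type*} [TopologicalSpace X] {f g : X → D}
    (hf : Continuous f) (hg : Continuous g) : IsOpen {x | sLt (f x) (g x)} := by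
  have hsLt : {x | sLt (f x) (g x)} = ⋂ i, {x | f x i < g x i} := by
    ext x
    simp [sLt]
  rw [hsLt]
  exact isOpen_iInter_of_finite fun i =>
    isOpen_lt ((continuous_apply i).comp hf) ((continuous_apply i).comp hg)

lemma rconst_one : rconst 1 = 1 := rfl

lemma continuous_rconst_smul {X : Type*} [AddCommGroup X] [Module D X] [TopologicalSpace X]
    [ContinuousSMul D X] (x : X) : Continuous fun t : ℝ => rconst t • x :=
  (continuous_pi fun _ => continuous_id).smul continuous_const

section Gauge

variable {X : Type*} [AddCommGroup X] [Module D X] {B : Set X} {x : X}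

lemma mem_smul_set_iff_inv_smul_mem_of_sLt {α : D} (hα : sLt 0 α) :
    x ∈ α • B ↔ α⁻¹ • x ∈ B := by
  constructor
  · rintro ⟨b, hb, rfl⟩
    rwa [smul_smul, inv_mul_cancel_of_sLt hα, one_smul]
  · intro h
    refine ⟨α⁻¹ • x, h, ?_⟩
    simp only [smul_smul, mul_inv_cancel_of_sLt hα, one_smul]

def gaugeSet (B : Set X) (x : X) : Set D := {α | sLt 0 α ∧ x ∈ α • B}

lemma minkowski_apply (B : Set X) (x : X) (i : Fin 4) :
    minkowski B x i = sInf ((fun α : D => α i) '' gaugeSet B x) := by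
  show sInf _ = _
  congr 1
  ext t
  simp [gaugeSet, and_assoc]

lemma inv_mem_gaugeSet {α : D} (hα : sLt 0 α) (hx : α • x ∈ B) : α⁻¹ ∈ gaugeSet B x :=
  ⟨sLt_zero_inv hα, (mem_smul_set_iff_inv_smul_mem_of_sLt (sLt_zero_inv hα)).mpr
    (by rwa [inv_inv])⟩

lemma smul_mem_gaugeSet {α c : D} (hc : sLt 0 c) (hα : α ∈ gaugeSet B x) :
    c * α ∈ gaugeSet B (c • x) := by
  obtain ⟨hα, b, hb, rfl⟩ := hα
  exact ⟨fun i => mul_pos (hc i) (hα i), b, hb, (smul_smul c α b).symm⟩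

lemma H2Absorbing.gaugeSet_nonempty (habs : H2Absorbing B) (x : X) :
    (gaugeSet B x).Nonempty := by
  obtain ⟨ε, hε, hsmul⟩ := habs x
  exact ⟨ε⁻¹, inv_mem_gaugeSet hε (hsmul ε (fun i => (hε i).le) le_rfl)⟩

lemma minkowski_le_of_mem_gaugeSet {α : D} (hα : α ∈ gaugeSet B x) (i : Fin 4) :
    minkowski B x i ≤ α i := by
  rw [minkowski_apply]
  refine csInf_le ⟨0, ?_⟩ (Set.mem_image_of_mem _ hα)
  rintro _ ⟨β, hβ, rfl⟩
  exact (hβ.1 i).le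

lemma minkowski_le_one_of_mem (hx : x ∈ B) : minkowski B x ≤ 1 :=
  minkowski_le_of_mem_gaugeSet ⟨fun _ => one_pos, x, hx, one_smul D x⟩

lemma H2Absorbing.exists_mem_gaugeSet_lt (habs : H2Absorbing B) {i : Fin 4} {r : ℝ}
    (h : minkowski B x i < r) : ∃ α ∈ gaugeSet B x, α i < r := by
  rw [minkowski_apply] at h
  obtain ⟨_, ⟨α, hα, rfl⟩, hlt⟩ :=
    exists_lt_of_csInf_lt ((habs.gaugeSet_nonempty x).image _) h
  exact ⟨α, hα, hlt⟩

lemma H2Convex.inf_mem_gaugeSet (hconv : H2Convex B) {α β : D} (hα : α ∈ gaugeSet B x)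
    (hβ : β ∈ gaugeSet B x) : α ⊓ β ∈ gaugeSet B x := by
  have hpos : sLt 0 (α ⊓ β) := fun i => lt_min (hα.1 i) (hβ.1 i)
  let δ : D := fun i => if α i ≤ β i then 1 else 0
  have hδ₀ : 0 ≤ δ := fun i => by by_cases h : α i ≤ β i <;> simp [δ, h]
  have hδ₁ : δ ≤ 1 := fun i => by by_cases h : α i ≤ β i <;> simp [δ, h]
  have hinv : (α ⊓ β)⁻¹ = δ * α⁻¹ + (1 - δ) * β⁻¹ := by
    funext i
    by_cases h : α i ≤ β i
    · simp [δ, h]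
    · simp [δ, h, min_eq_right (le_of_not_ge h)]
  refine ⟨hpos, (mem_smul_set_iff_inv_smul_mem_of_sLt hpos).mpr ?_⟩
  rw [hinv, add_smul, ← smul_smul, ← smul_smul]
  exact hconv _ ((mem_smul_set_iff_inv_smul_mem_of_sLt hα.1).mp hα.2)
    _ ((mem_smul_set_iff_inv_smul_mem_of_sLt hβ.1).mp hβ.2) δ hδ₀ hδ₁

lemma exists_mem_gaugeSet_sLt (hconv : H2Convex B) (habs : H2Absorbing B) {μ : D}
    (h : sLt (minkowski B x) μ) : ∃ α ∈ gaugeSet B x, sLt α μ := by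
  choose α hα hαμ using fun i => habs.exists_mem_gaugeSet_lt (h i)
  refine ⟨Finset.univ.inf' Finset.univ_nonempty α,
    Finset.inf'_mem _ (fun _ h₁ _ h₂ => hconv.inf_mem_gaugeSet h₁ h₂) _ _ _
      (fun i _ => hα i), fun j => ?_⟩
  exact (Finset.inf'_le α (Finset.mem_univ j) j).trans_lt (hαμ j)

lemma H2Balanced.mem_of_mem_gaugeSet_of_le_one (hbal : H2Balanced B) {α : D}
    (hα : α ∈ gaugeSet B x) (hα₁ : α ≤ 1) : x ∈ B := by
  obtain ⟨hpos, b, hb, rfl⟩ := hα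
  exact hbal b hb α fun i => (abs_of_pos (hpos i)).trans_le (hα₁ i)

lemma mem_of_minkowski_sLt_one (hconv : H2Convex B) (hbal : H2Balanced B)
    (habs : H2Absorbing B) (hx : sLt (minkowski B x) 1) : x ∈ B := by
  obtain ⟨α, hα, hα₁⟩ := exists_mem_gaugeSet_sLt hconv habs hx
  exact hbal.mem_of_mem_gaugeSet_of_le_one hα fun i => (hα₁ i).le

lemma minkowski_rconst_smul_sLt_one (habs : H2Absorbing B) (hx : minkowski B x ≤ 1)
    {t : ℝ} (ht₀ : 0 < t) (ht₁ : t < 1) : sLt (minkowski B (rconst t • x)) 1 := by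
  intro i
  obtain ⟨α, hα, hαt⟩ := habs.exists_mem_gaugeSet_lt
    ((hx i).trans_lt ((one_lt_inv₀ ht₀).mpr ht₁))
  calc minkowski B (rconst t • x) i ≤ t * α i :=
        minkowski_le_of_mem_gaugeSet (smul_mem_gaugeSet (fun _ => ht₀) hα) i
    _ < t * t⁻¹ := mul_lt_mul_of_pos_left hαt ht₀
    _ = 1 := mul_inv_cancel₀ ht₀.ne'

variable [TopologicalSpace X] [ContinuousSMul D X]

lemma minkowski_sLt_one_of_mem_interior (hx : x ∈ interior B) : sLt (minkowski B x) 1 := by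
  have hray : ∀ᶠ t in 𝓝 (1 : ℝ), rconst t • x ∈ interior B :=
    (continuous_rconst_smul x).continuousAt.eventually_mem
      (isOpen_interior.mem_nhds (by rwa [rconst_one, one_smul]))
  obtain ⟨t, ht₁, htB⟩ := hray.exists_gt
  have ht₀ : 0 < t := one_pos.trans ht₁
  intro i
  calc minkowski B x i ≤ t⁻¹ :=
        minkowski_le_of_mem_gaugeSet (inv_mem_gaugeSet (fun _ => ht₀) (interior_subset htB)) i
    _ < 1 := inv_lt_one_of_one_lt₀ ht₁

lemma mem_closure_of_minkowski_le_one (hconv : H2Convex B) (hbal : H2Balanced B)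
    (habs : H2Absorbing B) (hx : minkowski B x ≤ 1) : x ∈ closure B := by
  have hray : Tendsto (fun t : ℝ => rconst t • x) (𝓝[<] 1) (𝓝 x) := by
    simpa only [rconst_one, one_smul] using
      ((continuous_rconst_smul x).tendsto 1).mono_left nhdsWithin_le_nhds
  refine mem_closure_of_tendsto hray ?_
  filter_upwards [Ioo_mem_nhdsLT one_pos] with t ht
  exact mem_of_minkowski_sLt_one hconv hbal habs
    (minkowski_rconst_smul_sLt_one habs hx ht.1 ht.2)

end Gauge

theorem minkowski_ball_inclusions_general {X : Type*} [AddCommGroup X] [Module D X]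
    [TopologicalSpace X] [ContinuousSMul D X]
    (B : Set X) (hconv : H2Convex B) (hbal : H2Balanced B) (habs : H2Absorbing B) :
    (interior B ⊆ {x : X | sLt (minkowski B x) 1} ∧
        {x : X | sLt (minkowski B x) 1} ⊆ B ∧
        B ⊆ {x : X | minkowski B x ≤ 1} ∧
        {x : X | minkowski B x ≤ 1} ⊆ closure B) ∧
      (IsOpen B → B = {x : X | sLt (minkowski B x) 1}) ∧
      (IsClosed B → B = {x : X | minkowski B x ≤ 1}) ∧
      (Continuous (minkowski B) → interior B = {x : X | sLt (minkowski B x) 1}) := by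
  have hIA : interior B ⊆ {x | sLt (minkowski B x) 1} :=
    fun _ => minkowski_sLt_one_of_mem_interior
  have hAB : {x | sLt (minkowski B x) 1} ⊆ B :=
    fun _ => mem_of_minkowski_sLt_one hconv hbal habs
  have hBC : B ⊆ {x | minkowski B x ≤ 1} := fun _ => minkowski_le_one_of_mem
  have hCc : {x | minkowski B x ≤ 1} ⊆ closure B :=
    fun _ => mem_closure_of_minkowski_le_one hconv hbal habs
  refine ⟨⟨hIA, hAB, hBC, hCc⟩, fun hB => ?_, fun hB => ?_, fun hq => ?_⟩
  · rw [hB.interior_eq] at hIA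
    exact hAB.antisymm' hIA
  · rw [hB.closure_eq] at hCc
    exact hBC.antisymm hCc
  · exact hIA.antisymm (interior_maximal hAB (isOpen_setOf_sLt hq continuous_const))

/-- For an `H₂`-convex, `H₂`-balanced, `H₂`-absorbing set `B` with Minkowski
functional `q_B`, `A_B = {x : q_B x ≺ 1}`, `C_B = {x : q_B x ⪯ 1}`:
(i) `interior B ⊆ A_B ⊆ B ⊆ C_B ⊆ closure B`; (ii) if `B` is open then `B = A_B`;
(iii) if `B` is closed then `B = C_B`; (iv) if `q_B` is continuous then
`interior B = A_B`. -/
theorem minkowski_ball_inclusions {X : Type*} [AddCommGroup X] [Module D X]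
    [TopologicalSpace X] [T2Space X] [ContinuousAdd X] [ContinuousSMul D X]
    (B : Set X) (hconv : H2Convex B) (hbal : H2Balanced B) (habs : H2Absorbing B) :
    (interior B ⊆ {x : X | sLt (minkowski B x) 1} ∧
        {x : X | sLt (minkowski B x) 1} ⊆ B ∧
        B ⊆ {x : X | minkowski B x ≤ 1} ∧
        {x : X | minkowski B x ≤ 1} ⊆ closure B) ∧
      (IsOpen B → B = {x : X | sLt (minkowski B x) 1}) ∧
      (IsClosed B → B = {x : X | minkowski B x ≤ 1}) ∧
      (Continuous (minkowski B) → interior B = {x : X | sLt (minkowski B x) 1}) :=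
  minkowski_ball_inclusions_general B hconv hbal habs
end
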